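/- Let K ≥ 1 and k ≥ 1 be integers and η ∈ (0, 1/(2k)]. Let ν, ω : Fin K → [0,∞) satisfy ν(x) ≤ ω(x) for all x, Σ_x ν(x) ≤ 1, and Σ_x (ω(x) − ν(x)) ≤ η. For j = 1,…,k let f_j, g_j : Fin K × Fin K → [0,∞) satisfy f_j(x,x') ≤ g_j(x,x') for all x, x', Σ_{x'} f_j(x,x') = 1 − η and Σ_{x'} g_j(x,x') = 1 + η for all x, and Σ_{x'} |g_j(x,x') − f_j(x,x')| ≤ 3η for all x. Then Σ_{x ∈ Fin K} | (ν f_1 ⋯ f_k)(x) − (ω g_1 ⋯ g_k)(x) | ≤ 7 k η, where (ν f_1 ⋯ f_k)(x) denotes the x-coordinate of the row vector obtained by multiplying ν successively on the right by the matrices f_1,…,f_k, and similarly for ω and the g_j. -/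

import Mathlib

/-!
Since `ν ≤ ω` and `f_j ≤ g_j` entrywise, `ν f₁ ⋯ f_k ≤ ω g₁ ⋯ g_k` entrywise, so the ℓ¹ distance
is the difference of the total masses. Constant row sums make these masses exact:
`(1 + η)^k Σ ω` and `(1 - η)^k Σ ν`. With `k η ≤ 1/2`, Bernoulli gives `(1 - η)^k ≥ 1 - k η` and
`(1 + η)^k ≤ 1 + 2 k η`, so the difference is at most `(3 k + 2) η ≤ 7 k η`.
-/

open Finset

/-- Iterated right multiplication of a row vector `ν : Fin K → ℝ` by the matrices
`f 1, f 2, …, f j`: `rowIter ν f j = ν f₁ ⋯ f_j`, where `(z m)(x) = Σ_{x'} z(x') m(x', x)`. -/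
noncomputable def rowIter {K : ℕ} (ν : Fin K → ℝ) (f : ℕ → Fin K → Fin K → ℝ) :
    ℕ → Fin K → ℝ
  | 0 => ν
  | (j + 1) => fun x => ∑ x', rowIter ν f j x' * f (j + 1) x' x

section RowIter

variable {K k : ℕ} {ν ω : Fin K → ℝ} {f g : ℕ → Fin K → Fin K → ℝ}

theorem rowIter_nonneg (hν : ∀ x, 0 ≤ ν x)
    (hf : ∀ j, 1 ≤ j → j ≤ k → ∀ x x', 0 ≤ f j x x') :
    ∀ j ≤ k, ∀ x, 0 ≤ rowIter ν f j x
  | 0, _, x => hν x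
  | j + 1, hj, x => sum_nonneg fun x' _ =>
      mul_nonneg (rowIter_nonneg hν hf j (by omega) x') (hf (j + 1) (by omega) hj x' x)

theorem rowIter_le_rowIter (hν : ∀ x, 0 ≤ ν x)
    (hf : ∀ j, 1 ≤ j → j ≤ k → ∀ x x', 0 ≤ f j x x') (hνω : ∀ x, ν x ≤ ω x)
    (hfg : ∀ j, 1 ≤ j → j ≤ k → ∀ x x', f j x x' ≤ g j x x') :
    ∀ j ≤ k, ∀ x, rowIter ν f j x ≤ rowIter ω g j x
  | 0, _, x => hνω x
  | j + 1, hj, x => sum_le_sum fun x' _ => by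
      have hle := rowIter_le_rowIter hν hf hνω hfg j (by omega) x'
      exact mul_le_mul hle (hfg (j + 1) (by omega) hj x' x) (hf (j + 1) (by omega) hj x' x)
        ((rowIter_nonneg hν hf j (by omega) x').trans hle)

theorem sum_rowIter_of_sum_eq {c : ℝ} (hf : ∀ j, 1 ≤ j → j ≤ k → ∀ x, ∑ x', f j x x' = c) :
    ∀ j ≤ k, ∑ x, rowIter ν f j x = c ^ j * ∑ x, ν x
  | 0, _ => by simp [rowIter]
  | j + 1, hj => by
      have ih := sum_rowIter_of_sum_eq hf j (by omega)
      calc ∑ x, ∑ x', rowIter ν f j x' * f (j + 1) x' x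
          = ∑ x', rowIter ν f j x' * ∑ x, f (j + 1) x' x := by
            rw [sum_comm]; simp only [mul_sum]
        _ = c ^ (j + 1) * ∑ x, ν x := by
            simp only [hf (j + 1) (by omega) hj, ← sum_mul, ih]; ring

end RowIter

theorem one_add_pow_mul_one_sub_mul_le_one {η : ℝ} (hη : -1 ≤ η) :
    ∀ n : ℕ, (1 + η) ^ n * (1 - n * η) ≤ 1
  | 0 => by simp
  | n + 1 => by
      have ih := one_add_pow_mul_one_sub_mul_le_one hη n
      have hpow : 0 ≤ (1 + η) ^ n := pow_nonneg (by linarith) n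
      have hstep : (1 + η) * (1 - (n + 1) * η) ≤ 1 - n * η := by
        nlinarith [mul_nonneg (n.cast_nonneg : (0 : ℝ) ≤ n) (sq_nonneg η), sq_nonneg η]
      calc (1 + η) ^ (n + 1) * (1 - ↑(n + 1) * η)
          = (1 + η) ^ n * ((1 + η) * (1 - (n + 1) * η)) := by push_cast; ring
        _ ≤ (1 + η) ^ n * (1 - n * η) := mul_le_mul_of_nonneg_left hstep hpow
        _ ≤ 1 := ih

theorem one_add_pow_le_one_add_two_mul {η : ℝ} {n : ℕ} (hη : 0 ≤ η) (hnη : n * η ≤ 1 / 2) :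
    (1 + η) ^ n ≤ 1 + 2 * (n * η) := by
  have h := one_add_pow_mul_one_sub_mul_le_one (by linarith : -1 ≤ η) n
  have hpow : 0 ≤ (1 + η) ^ n := pow_nonneg (by linarith) n
  have hnη0 : 0 ≤ n * η := mul_nonneg n.cast_nonneg hη
  have hle_two : (1 + η) ^ n ≤ 2 := by nlinarith
  nlinarith

theorem one_add_pow_mul_sub_one_sub_pow_mul_le {η a b : ℝ} {n : ℕ} (hη : 0 ≤ η)
    (hnη : n * η ≤ 1 / 2) (ha0 : 0 ≤ a) (ha1 : a ≤ 1) (hab : b - a ≤ η) :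
    (1 + η) ^ n * b - (1 - η) ^ n * a ≤ (3 * n + 2) * η := by
  have hupper := one_add_pow_le_one_add_two_mul hη hnη
  have hlower : 1 - n * η ≤ (1 - η) ^ n := by
    rcases n.eq_zero_or_pos with rfl | hn
    · simp
    have hη_le : η ≤ n * η := le_mul_of_one_le_left hη (by exact_mod_cast hn)
    simpa [sub_eq_add_neg] using one_add_mul_le_pow (by linarith : (-2 : ℝ) ≤ -η) n
  have hpow : 0 ≤ (1 + η) ^ n := pow_nonneg (by linarith) n
  have hnη0 : 0 ≤ n * η := mul_nonneg n.cast_nonneg hη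
  have hb : (1 + η) ^ n * b ≤ (1 + 2 * (n * η)) * (a + η) :=
    (mul_le_mul_of_nonneg_left (by linarith) hpow).trans
      (mul_le_mul_of_nonneg_right hupper (by linarith))
  have ha : (1 - n * η) * a ≤ (1 - η) ^ n * a := mul_le_mul_of_nonneg_right hlower ha0
  nlinarith [mul_le_mul_of_nonneg_left ha1 hnη0, mul_le_mul_of_nonneg_right hnη hη]

theorem stmt9_general (K k : ℕ) (hk : 1 ≤ k)
    (η : ℝ) (hη0 : 0 < η) (hη : η ≤ 1 / (2 * k))
    (ν ω : Fin K → ℝ) (hν0 : ∀ x, 0 ≤ ν x)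
    (hνω : ∀ x, ν x ≤ ω x)
    (hνsum : ∑ x, ν x ≤ 1) (hdiff : ∑ x, (ω x - ν x) ≤ η)
    (f g : ℕ → Fin K → Fin K → ℝ)
    (hf0 : ∀ j, 1 ≤ j → j ≤ k → ∀ x x', 0 ≤ f j x x')
    (hfg : ∀ j, 1 ≤ j → j ≤ k → ∀ x x', f j x x' ≤ g j x x')
    (hfsum : ∀ j, 1 ≤ j → j ≤ k → ∀ x, ∑ x', f j x x' = 1 - η)
    (hgsum : ∀ j, 1 ≤ j → j ≤ k → ∀ x, ∑ x', g j x x' = 1 + η) :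
    ∑ x, |rowIter ν f k x - rowIter ω g k x| ≤ 7 * k * η := by
  have hk1 : (1 : ℝ) ≤ k := by exact_mod_cast hk
  have hkη : k * η ≤ 1 / 2 := by
    rw [le_div_iff₀ (by positivity)] at hη; linarith
  have hdist : ∑ x, |rowIter ν f k x - rowIter ω g k x|
      = (1 + η) ^ k * ∑ x, ω x - (1 - η) ^ k * ∑ x, ν x := by
    rw [← sum_rowIter_of_sum_eq hgsum k le_rfl, ← sum_rowIter_of_sum_eq hfsum k le_rfl,
      ← sum_sub_distrib]
    refine sum_congr rfl fun x _ => abs_sub_comm _ _ |>.trans (abs_of_nonneg ?_)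
    exact sub_nonneg.2 (rowIter_le_rowIter hν0 hf0 hνω hfg k le_rfl x)
  rw [hdist]
  calc (1 + η) ^ k * ∑ x, ω x - (1 - η) ^ k * ∑ x, ν x ≤ (3 * k + 2) * η :=
        one_add_pow_mul_sub_one_sub_pow_mul_le hη0.le hkη (sum_nonneg fun x _ => hν0 x) hνsum
          (by rwa [← sum_sub_distrib])
    _ ≤ 7 * k * η := by nlinarith

/-- Propagation of bracket sizes through products of sub/super-stochastic matrices:
`Σ_x |(ν f₁ ⋯ f_k)(x) − (ω g₁ ⋯ g_k)(x)| ≤ 7 k η`. -/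
theorem stmt9 (K k : ℕ) (hK : 1 ≤ K) (hk : 1 ≤ k)
    (η : ℝ) (hη0 : 0 < η) (hη : η ≤ 1 / (2 * k))
    (ν ω : Fin K → ℝ) (hν0 : ∀ x, 0 ≤ ν x) (hω0 : ∀ x, 0 ≤ ω x)
    (hνω : ∀ x, ν x ≤ ω x)
    (hνsum : ∑ x, ν x ≤ 1) (hdiff : ∑ x, (ω x - ν x) ≤ η)
    (f g : ℕ → Fin K → Fin K → ℝ)
    (hf0 : ∀ j, 1 ≤ j → j ≤ k → ∀ x x', 0 ≤ f j x x')
    (hg0 : ∀ j, 1 ≤ j → j ≤ k → ∀ x x', 0 ≤ g j x x')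
    (hfg : ∀ j, 1 ≤ j → j ≤ k → ∀ x x', f j x x' ≤ g j x x')
    (hfsum : ∀ j, 1 ≤ j → j ≤ k → ∀ x, ∑ x', f j x x' = 1 - η)
    (hgsum : ∀ j, 1 ≤ j → j ≤ k → ∀ x, ∑ x', g j x x' = 1 + η)
    (habs : ∀ j, 1 ≤ j → j ≤ k → ∀ x, ∑ x', |g j x x' - f j x x'| ≤ 3 * η) :
    ∑ x, |rowIter ν f k x - rowIter ω g k x| ≤ 7 * k * η :=
  stmt9_general K k hk η hη0 hη ν ω hν0 hνω hνsum hdiff f g hf0 hfg hfsum hgsum
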